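/- Let m ≥ 0 be an integer and let f, g ∈ Harm_{2m} be harmonic homogeneous polynomials of degree 2m on ℝⁿ. Then ∫_{S^{n−1}} f·g dμ̄ = ( Π_{k=0}^{2m−1} (n+2k) )^{−1} · ⟨f,g⟩, where ⟨·,·⟩ is the differential pairing. -/

import Mathlib

noncomputable section

open MvPolynomial MeasureTheory Finset
open scoped RealInnerProductSpace Manifold

namespace Heat

abbrev Poly (n : ℕ) := MvPolynomial (Fin n) ℝ
abbrev E (n : ℕ) := EuclideanSpace ℝ (Fin n)

variable (n : ℕ)

/-- The differential operator `∂^I` on polynomials. -/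
def pdI (I : Fin n →₀ ℕ) : Poly n → Poly n :=
  (List.ofFn fun i : Fin n => (fun p : Poly n => (⇑(pderiv i))^[I i] p)).foldr (· ∘ ·) id

/-- The differential pairing `⟨g, f⟩ = (g(∂)f)(0)`. -/
def dPair (g f : Poly n) : ℝ :=
  eval 0 (∑ I ∈ g.support, g.coeff I • pdI n I f)

/-- The Laplacian `Δ = -∑ ∂ᵢ²` as a linear map on polynomials. -/
def lap : Poly n →ₗ[ℝ] Poly n :=
  -∑ i : Fin n, ((pderiv i : Derivation ℝ (Poly n) (Poly n)).toLinearMap ∘ₗ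
    (pderiv i : Derivation ℝ (Poly n) (Poly n)).toLinearMap)

/-- `r² = ∑ xᵢ²`. -/
def rsq : Poly n := ∑ i : Fin n, X i ^ 2

/-- Harmonic homogeneous polynomials of degree `m`. -/
def Harm (m : ℕ) : Submodule ℝ (Poly n) :=
  homogeneousSubmodule (Fin n) ℝ m ⊓ LinearMap.ker (lap n)

/-- `B` is an orthonormal basis of the subspace `S` w.r.t. the differential pairing. -/
structure IsONBasis (S : Submodule ℝ (Poly n)) (B : Finset (Poly n)) : Prop where
  mem : ∀ h ∈ B, h ∈ S
  ortho : ∀ h ∈ B, ∀ g ∈ B, dPair n h g = if h = g then 1 else 0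
  span : Submodule.span ℝ (B : Set (Poly n)) = S

/-- Evaluation of a polynomial at a point of Euclidean space. -/
def peval (f : Poly n) (x : E n) : ℝ := eval (fun i => x i) f

/-- `μ` is the rotation-invariant probability measure on the unit sphere `S^{n-1}`. -/
structure IsSphereMeasure (μ : Measure (E n)) : Prop where
  prob : IsProbabilityMeasure μ
  supp : μ (Metric.sphere (0 : E n) 1)ᶜ = 0
  inv : ∀ φ : E n ≃ₗᵢ[ℝ] E n, Measure.map φ μ = μ

/-- The lattice spanned (over `ℤ`) by the vectors `b`. -/
def latticeOf (b : Fin n → E n) : Submodule ℤ (E n) := Submodule.span ℤ (Set.range b)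

/-- An integral lattice: all square norms are integers. -/
def IsIntegral (L : Submodule ℤ (E n)) : Prop := ∀ v ∈ L, ∃ z : ℤ, ‖v‖ ^ 2 = (z : ℝ)

/-- The matrix `A` with `½A` the Gram matrix of the basis `b`. -/
def evenGram (b : Fin n → E n) : Matrix (Fin n) (Fin n) ℝ :=
  Matrix.of fun i j => 2 * ⟪b i, b j⟫

/-- A real matrix has integer entries and even diagonal. -/
def IntEvenDiag (M : Matrix (Fin n) (Fin n) ℝ) : Prop :=
  (∀ i j, ∃ z : ℤ, M i j = (z : ℝ)) ∧ ∀ i, ∃ z : ℤ, M i i = 2 * (z : ℝ)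

/-- `N` is the level of the lattice with basis `b`. -/
def IsLevel (b : Fin n → E n) (N : ℕ) : Prop :=
  0 < N ∧ IntEvenDiag n ((N : ℝ) • (evenGram n b)⁻¹) ∧
    ∀ M : ℕ, 0 < M → IntEvenDiag n ((M : ℝ) • (evenGram n b)⁻¹) → N ≤ M

/-- The spherical theta function `Θ_{h,Λ}`. -/
def theta (h : Poly n) (L : Submodule ℤ (E n)) (τ : UpperHalfPlane) : ℂ :=
  ∑' v : L, (peval n h (v : E n) : ℂ) *
    Complex.exp (2 * (Real.pi : ℂ) * Complex.I * ((‖(v : E n)‖ ^ 2 : ℝ) : ℂ) * (τ : ℂ))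

/-- The image of the lattice `L` under an isometry of Euclidean space. -/
def mapLat (φ : E n ≃ₗᵢ[ℝ] E n) (L : Submodule ℤ (E n)) : Submodule ℤ (E n) :=
  L.map (φ.toLinearEquiv.toLinearMap.restrictScalars ℤ)

/-- The Kronecker symbol at 2, `(a/2)`. -/
def kronAtTwo (a : ℤ) : ℤ :=
  if a % 2 = 0 then 0 else if a % 8 = 1 ∨ a % 8 = 7 then 1 else -1

/-- The Kronecker symbol `(a/m)`. -/
def kronSym (a m : ℤ) : ℤ :=
  if m = 0 then (if a = 1 ∨ a = -1 then 1 else 0)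
  else
    (if m < 0 ∧ a < 0 then -1 else 1) *
      kronAtTwo a ^ (m.natAbs.factorization 2) *
      jacobiSym a (m.natAbs / 2 ^ (m.natAbs.factorization 2))

open UpperHalfPlane in
/-- `f` is a modular form of weight `w`, level `N` and character `χ`:  it is holomorphic
on the upper half plane, transforms under `Γ₀(N)` with automorphy factor `χ(d)(cτ+d)^w`,
and is bounded towards all cusps. -/
structure IsModularForm (N : ℕ) (w : ℝ) (χ : ℤ → ℤ) (f : UpperHalfPlane → ℂ) : Prop where
  holo : MDifferentiable 𝓘(ℂ) 𝓘(ℂ) f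
  transf : ∀ γ : Matrix.SpecialLinearGroup (Fin 2) ℤ, γ ∈ CongruenceSubgroup.Gamma0 N →
    ∀ τ : UpperHalfPlane, f (γ • τ) =
      ((χ ((γ : Matrix (Fin 2) (Fin 2) ℤ) 1 1) : ℝ) : ℂ) *
      (((((γ : Matrix (Fin 2) (Fin 2) ℤ) 1 0 : ℤ) : ℂ)) * (τ : ℂ) +
        (((γ : Matrix (Fin 2) (Fin 2) ℤ) 1 1 : ℤ) : ℂ)) ^ (w : ℂ) * f τ
  bdd : ∀ γ : Matrix.SpecialLinearGroup (Fin 2) ℤ,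
    IsBoundedAtImInfty fun τ : UpperHalfPlane =>
      (((((γ : Matrix (Fin 2) (Fin 2) ℤ) 1 0 : ℤ) : ℂ)) * (τ : ℂ) +
        (((γ : Matrix (Fin 2) (Fin 2) ℤ) 1 1 : ℤ) : ℂ)) ^ (-(w : ℂ)) * f (γ • τ)

/-- The trivial character. -/
def trivChar : ℤ → ℤ := fun _ => 1

open scoped Classical in
/-- The multiple theta series `Θ_{m₁,…,m_k,Λ}` attached to a family of bases `B i`. -/
def thetaMulti (k : ℕ) (B : Fin k → Finset (Poly n)) (L : Submodule ℤ (E n))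
    (μ : Measure (E n)) (τ : UpperHalfPlane) : ℂ :=
  ∑ g ∈ Fintype.piFinset B,
    (∏ i, theta n (g i) L τ) * (((∫ x, ∏ i, peval n (g i) x ∂μ) : ℝ) : ℂ)

/-- The polynomial `p_m` (evaluated at `c`). -/
def pmVal (m : ℕ) (c : ℝ) : ℝ :=
  ∑ k ∈ Finset.range (m + 1),
    (-1 : ℝ) ^ k * c ^ (2 * m - 2 * k) /
      ((Nat.factorial (2 * m - 2 * k) : ℝ) * (Nat.factorial k : ℝ) * 2 ^ k *
        ∏ l ∈ Finset.range k, ((n : ℝ) + 4 * m - 4 - 2 * l))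

/-- The heat flux `f_Λ` of the lattice `L`. -/
def heatF (L : Submodule ℤ (E n)) (t : ℝ) (x : E n) : ℝ :=
  (4 * Real.pi * t) ^ (-(n : ℝ) / 2) * ∑' γ : L, Real.exp (-‖x - (γ : E n)‖ ^ 2 / (4 * t))

/-- Partial derivative of a function on Euclidean space. -/
def pdFun (i : Fin n) (F : E n → ℝ) : E n → ℝ := fun x => fderiv ℝ F x (EuclideanSpace.single i 1)

/-- Iterated partial derivative `∂^I` of a function on Euclidean space. -/
def pdIFun (I : Fin n →₀ ℕ) : (E n → ℝ) → (E n → ℝ) :=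
  (List.ofFn fun i : Fin n => (fun F : E n → ℝ => (pdFun n i)^[I i] F)).foldr (· ∘ ·) id

/-- The differential operator `g(∂)` applied to a smooth function. -/
def applyDiff (g : Poly n) (F : E n → ℝ) (x : E n) : ℝ :=
  ∑ I ∈ g.support, g.coeff I * pdIFun n I F x

open scoped Classical in
/-- The degree `2m` homogeneous term of the Taylor expansion of `x ↦ f_Λ(t,x)` at `0`. -/
def taylorTerm (L : Submodule ℤ (E n)) (m : ℕ) (t : ℝ) : Poly n :=
  ∑ c ∈ (Fintype.piFinset fun _ : Fin n => Finset.range (2 * m + 1)).filter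
      (fun c => ∑ i, c i = 2 * m),
    (pdIFun n (Finsupp.equivFunOnFinite.symm c) (heatF n L t) 0 /
      ∏ i, (Nat.factorial (c i) : ℝ)) • ∏ i, X i ^ c i

/-- `P` is the orthogonal projection of `A_m` onto `Harm_m` w.r.t. the differential
pairing: on `A_m` it takes values in `Harm_m`, `f - P f` is orthogonal to `Harm_m`,
and it is the identity on `Harm_m`. -/
def IsHarmProj (m : ℕ) (P : Poly n → Poly n) : Prop :=
  (∀ f ∈ homogeneousSubmodule (Fin n) ℝ m, P f ∈ Harm n m ∧
    ∀ h ∈ Harm n m, dPair n h (f - P f) = 0) ∧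
  ∀ h ∈ Harm n m, P h = h

/-- The `E₈` lattice as a subset of `ℝ⁸`. -/
def E8set : Set (E 8) :=
  {x | ((∀ i, ∃ z : ℤ, x i = (z : ℝ)) ∨ (∀ i, ∃ z : ℤ, x i = (z : ℝ) + 1 / 2)) ∧
    ∃ z : ℤ, (∑ i, x i) = 2 * (z : ℝ)}

end Heat

namespace Heat

variable (n : ℕ)

/-- The operator `P_{harm,m} = ∑_{k=0}^{⌊m/2⌋} r_{k,m} · r^{2k} Δ^k` on polynomials. -/
def PharmOp (m : ℕ) : Poly n → Poly n := fun f =>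
  ∑ k ∈ Finset.range (m / 2 + 1),
    (1 / ((2 : ℝ) ^ k * (Nat.factorial k : ℝ) *
      ∏ l ∈ Finset.range k, ((n : ℝ) + 2 * (m : ℝ) - 4 - 2 * (l : ℝ)))) •
      (rsq n ^ k * ((lap n ^ k) f))

/-- The quantity `Ξ(u,v,w)`. -/
def Xi (u v w : E n) : ℝ :=
  2 * ‖u‖ ^ 2 * ‖v‖ ^ 2 * ‖w‖ ^ 2 -
    (n : ℝ) * (‖u‖ ^ 2 * ⟪v, w⟫ ^ 2 + ‖v‖ ^ 2 * ⟪u, w⟫ ^ 2 + ‖w‖ ^ 2 * ⟪u, v⟫ ^ 2) +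
    (n : ℝ) ^ 2 * ⟪v, w⟫ * ⟪u, w⟫ * ⟪u, v⟫

/-- The `k`-th coefficient of the claimed q-expansion of `Θ_{m,m,Λ}`. -/
def mmCoeff (m : ℕ) (L : Submodule ℤ (E n)) (k : ℕ) : ℝ :=
  ∑' p : {p : L × L // (p.1 : E n) ≠ 0 ∧ (p.2 : E n) ≠ 0 ∧
      ‖(p.1 : E n)‖ ^ 2 + ‖(p.2 : E n)‖ ^ 2 = (k : ℝ)},
    pmVal n m (⟪(p.1.1 : E n), (p.1.2 : E n)⟫ / (‖(p.1.1 : E n)‖ * ‖(p.1.2 : E n)‖)) *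
      ‖(p.1.1 : E n)‖ ^ (2 * m) * ‖(p.1.2 : E n)‖ ^ (2 * m)

/-- The sum `∑ Ξ(u,v,w)` over lattice triples of total square norm `k`. -/
def tripleCoeff (L : Submodule ℤ (E n)) (k : ℕ) : ℝ :=
  ∑' t : {t : L × L × L //
      ‖(t.1 : E n)‖ ^ 2 + ‖(t.2.1 : E n)‖ ^ 2 + ‖(t.2.2 : E n)‖ ^ 2 = (k : ℝ)},
    Xi n (t.1.1 : E n) (t.1.2.1 : E n) (t.1.2.2 : E n)

/-- The generalized binomial coefficient `C(z,k) = z(z-1)⋯(z-k+1)/k!`. -/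
def genBinom (z : ℝ) (k : ℕ) : ℝ :=
  (∏ a ∈ Finset.range k, (z - (a : ℝ))) / (Nat.factorial k : ℝ)

open scoped Classical in
/-- The monomial orthonormal basis `{xᵢ²/√2} ∪ {xᵢxⱼ, i<j}` of `A₂`. -/
def B2 : Finset (Poly n) :=
  (Finset.univ.image fun i : Fin n => (Real.sqrt 2)⁻¹ • (X i ^ 2 : Poly n)) ∪
  ((Finset.univ.filter fun p : Fin n × Fin n => p.1 < p.2).image
    fun p => (X p.1 * X p.2 : Poly n))

/-- The explicit harmonic projection in degree two, `P = id + (1/(2n)) r² Δ`. -/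
def P2 : Poly n → Poly n := fun g => g + (1 / (2 * (n : ℝ))) • (rsq n * lap n g)

end Heat

/-!
Write `⟨g, f⟩ = ∑_γ γ! g_γ f_γ` for the coefficient form of the differential pairing. For it,
multiplication by `xᵢ` is adjoint to `∂ᵢ`, so multiplication by `r²` is adjoint to `-Δ`.

Integration against `μ̄` on `A_{2s}` is represented by the moment polynomial `Q`, and
`⟨(∑ uᵢxᵢ)^{2s}, Q⟩ = (2s)! Q(u)` makes `Q(u) = ∫ ⟨u, x⟩^{2s} dμ̄(x) / (2s)!`. By rotation
invariance this depends only on `|u|`, so `Q = c r^{2s}` and `∫ h dμ̄ = c ⟨r^{2s}, h⟩`.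

For harmonic `f, g` of degree `d`, `Δ(fg) = -2 ∑ ∂ᵢf ∂ᵢg`; moving one `r²` across and using
Euler's identity gives `⟨r^{2d}, fg⟩ = 2^d d! ⟨f, g⟩` by induction. The constant `c` comes from
`∫ r^{2d} dμ̄ = 1` and `⟨r^{2d}, r^{2d}⟩ = 2^d d! ∏_{k<d} (n + 2k)`.
-/

open scoped Nat

theorem Finsupp.prod_factorial_add_single {σ : Type*} (γ : σ →₀ ℕ) (i : σ) :
    ((γ + single i 1).prod fun _ k => k !) = (γ i + 1) * γ.prod fun _ k => k ! := by
  have hfac : ∀ j : σ, (fun _ k => k !) j 0 = 1 := fun _ => Nat.factorial_zero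
  rw [← mul_prod_erase' _ i _ hfac, ← mul_prod_erase' γ i _ hfac, erase_add, erase_single,
    add_zero, add_apply, single_eq_same, Nat.factorial_succ, mul_assoc]

theorem MvPolynomial.IsHomogeneous.support_subset_finsuppAntidiag {σ R : Type*} [Fintype σ]
    [DecidableEq σ] [CommSemiring R] {p : MvPolynomial σ R} {d : ℕ} (hp : p.IsHomogeneous d) :
    p.support ⊆ univ.finsuppAntidiag d := fun γ hγ =>
  mem_finsuppAntidiag.mpr
    ⟨γ.degree_eq_sum.symm.trans (hp.degree_eq_sum_deg_support hγ).symm, subset_univ _⟩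

namespace MvPolynomial

section CommSemiring

variable {σ R : Type*} [CommSemiring R]

def fischer (g f : MvPolynomial σ R) : R :=
  ∑ γ ∈ g.support, (γ.prod fun _ k => k ! : ℕ) * g.coeff γ * f.coeff γ

theorem fischer_eq_sum_of_support_subset {g f : MvPolynomial σ R} {s : Finset (σ →₀ ℕ)}
    (hs : g.support ⊆ s) :
    fischer g f = ∑ γ ∈ s, (γ.prod fun _ k => k ! : ℕ) * g.coeff γ * f.coeff γ :=
  sum_subset hs fun γ _ hγ => by rw [notMem_support_iff.mp hγ, mul_zero, zero_mul]

theorem fischer_comm (g f : MvPolynomial σ R) : fischer g f = fischer f g := by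
  classical
  rw [fischer_eq_sum_of_support_subset subset_union_left,
    fischer_eq_sum_of_support_subset (subset_union_right (s₁ := g.support))]
  exact sum_congr rfl fun γ _ => by ring

theorem fischer_add_left (g₁ g₂ f : MvPolynomial σ R) :
    fischer (g₁ + g₂) f = fischer g₁ f + fischer g₂ f := by
  classical
  rw [fischer_eq_sum_of_support_subset support_add,
    fischer_eq_sum_of_support_subset subset_union_left,
    fischer_eq_sum_of_support_subset (subset_union_right (s₁ := g₁.support)), ← sum_add_distrib]
  exact sum_congr rfl fun γ _ => by rw [coeff_add]; ring

theorem fischer_smul_left (c : R) (g f : MvPolynomial σ R) :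
    fischer (c • g) f = c * fischer g f := by
  rw [fischer_eq_sum_of_support_subset support_smul, fischer, mul_sum]
  exact sum_congr rfl fun γ _ => by rw [coeff_smul, smul_eq_mul]; ring

theorem fischer_sum_left {ι : Type*} (s : Finset ι) (g : ι → MvPolynomial σ R)
    (f : MvPolynomial σ R) : fischer (∑ i ∈ s, g i) f = ∑ i ∈ s, fischer (g i) f := by
  classical
  induction s using Finset.induction_on with
  | empty => simp [fischer]
  | insert a s ha ih => rw [sum_insert ha, fischer_add_left, ih, sum_insert ha]

theorem fischer_smul_right (c : R) (g f : MvPolynomial σ R) :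
    fischer g (c • f) = c * fischer g f := by
  rw [fischer_comm, fischer_smul_left, fischer_comm]

theorem fischer_sum_right {ι : Type*} (s : Finset ι) (f : ι → MvPolynomial σ R)
    (g : MvPolynomial σ R) : fischer g (∑ i ∈ s, f i) = ∑ i ∈ s, fischer g (f i) := by
  rw [fischer_comm, fischer_sum_left]
  exact sum_congr rfl fun i _ => fischer_comm _ _

theorem fischer_monomial_left (γ : σ →₀ ℕ) (a : R) (f : MvPolynomial σ R) :
    fischer (monomial γ a) f = (γ.prod fun _ k => k ! : ℕ) * a * f.coeff γ := by
  classical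
  rw [fischer_eq_sum_of_support_subset support_monomial_subset, sum_singleton, coeff_monomial,
    if_pos rfl]

theorem fischer_C_left (a : R) (f : MvPolynomial σ R) : fischer (C a) f = a * f.coeff 0 := by
  rw [C_apply, fischer_monomial_left, Finsupp.prod_zero_index, Nat.cast_one, one_mul]

theorem fischer_X_mul (i : σ) (g f : MvPolynomial σ R) :
    fischer (X i * g) f = fischer g (pderiv i f) := by
  induction g using MvPolynomial.induction_on' with
  | monomial γ a =>
    rw [← pow_one (X i), ← monomial_single_add, fischer_monomial_left, fischer_monomial_left,
      coeff_pderiv, add_comm, Finsupp.prod_factorial_add_single]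
    push_cast
    ring
  | add p q hp hq => rw [mul_add, fischer_add_left, fischer_add_left, hp, hq]

theorem sum_fischer_pderiv_pderiv [Fintype σ] {f : MvPolynomial σ R} {d : ℕ}
    (hf : f.IsHomogeneous d) (g : MvPolynomial σ R) :
    ∑ i, fischer (pderiv i f) (pderiv i g) = d * fischer f g := by
  simp_rw [← fischer_X_mul, ← fischer_sum_left, hf.sum_X_mul_pderiv, ← Nat.cast_smul_eq_nsmul R,
    fischer_smul_left]

theorem fischer_sum_smul_X_pow [Fintype σ] (u : σ → R) {q : MvPolynomial σ R} {d : ℕ}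
    (hq : q.IsHomogeneous d) : fischer ((∑ i, u i • X i) ^ d) q = d ! * eval u q := by
  rw [fischer_comm, fischer, eval_eq, mul_sum]
  refine sum_congr rfl fun γ hγ => ?_
  have hdeg : (γ.sum fun _ m => m) = d := (hq.degree_eq_sum_deg_support hγ).symm
  rw [coeff_linearCombination_X_pow_of_fintype, if_pos hdeg, ← hdeg, Finsupp.prod, Finsupp.sum,
    ← Nat.multinomial_spec, Finsupp.multinomial_eq, Finsupp.prod]
  push_cast
  ring

theorem pderiv_comm (i j : σ) (f : MvPolynomial σ R) :
    pderiv i (pderiv j f) = pderiv j (pderiv i f) := by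
  rcases eq_or_ne i j with rfl | hij
  · rfl
  ext γ
  simp only [coeff_pderiv, Finsupp.add_apply, Finsupp.single_eq_of_ne hij,
    Finsupp.single_eq_of_ne hij.symm, add_zero, add_right_comm γ (Finsupp.single j 1)]
  ring

theorem coeff_pderiv_iterate (i : σ) (k : ℕ) (p : MvPolynomial σ R) (γ : σ →₀ ℕ) :
    coeff γ ((pderiv i)^[k] p) =
      coeff (γ + Finsupp.single i k) p * (γ i + k).descFactorial k := by
  induction k generalizing p with
  | zero => simp
  | succ k ih =>
    rw [Function.iterate_succ_apply, ih, coeff_pderiv, add_assoc, ← Finsupp.single_add,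
      Finsupp.add_apply, Finsupp.single_eq_same, ← add_assoc, Nat.succ_descFactorial_succ]
    push_cast
    ring

theorem coeff_foldr_pderiv_iterate (I : σ →₀ ℕ) (l : List σ) (hl : l.Nodup) (γ : σ →₀ ℕ)
    (hγ : ∀ j ∈ l, γ j = 0) (p : MvPolynomial σ R) :
    coeff γ ((l.map fun i (q : MvPolynomial σ R) => (pderiv i)^[I i] q).foldr (· ∘ ·) id p) =
      coeff (γ + (l.map fun j => Finsupp.single j (I j)).sum) p *
        (l.map fun j => ((I j)! : R)).prod := by
  induction l generalizing γ with
  | nil => simp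
  | cons a l ih =>
    obtain ⟨hal, hl⟩ := List.nodup_cons.mp hl
    have hγ' : ∀ j ∈ l, (γ + Finsupp.single a (I a)) j = 0 := fun j hj => by
      rw [Finsupp.add_apply, hγ j (List.mem_cons_of_mem a hj), zero_add,
        Finsupp.single_eq_of_ne (ne_of_mem_of_not_mem hj hal)]
    simp only [List.map_cons, List.foldr_cons, Function.comp_apply, List.sum_cons, List.prod_cons]
    rw [coeff_pderiv_iterate, ih hl _ hγ', hγ a List.mem_cons_self, zero_add,
      Nat.descFactorial_self, add_assoc]
    ring

end CommSemiring

theorem fischer_neg_right {σ R : Type*} [CommRing R] (g f : MvPolynomial σ R) :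
    fischer g (-f) = -fischer g f := by
  rw [← neg_one_smul R f, fischer_smul_right, neg_one_mul]

end MvPolynomial

section RotationInvariance

variable {F : Type*} [NormedAddCommGroup F] [InnerProductSpace ℝ F] [MeasurableSpace F]
  [BorelSpace F] {ν : Measure F}

theorem integral_comp_inner_eq_of_norm_eq (hν : ∀ ρ : F ≃ₗᵢ[ℝ] F, ν.map ρ = ν) (G : ℝ → ℝ)
    {u w : F} (h : ‖u‖ = ‖w‖) : ∫ x, G ⟪u, x⟫ ∂ν = ∫ x, G ⟪w, x⟫ ∂ν := by
  set ρ := Submodule.reflection (ℝ ∙ (u - w))ᗮ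
  calc ∫ x, G ⟪u, x⟫ ∂ν = ∫ x, G ⟪ρ u, ρ x⟫ ∂ν := by simp_rw [LinearIsometryEquiv.inner_map_map]
    _ = ∫ x, G ⟪w, x⟫ ∂(ν.map ρ.toHomeomorph.toMeasurableEquiv) := by
      rw [integral_map_equiv, Submodule.reflection_sub h]
      rfl
    _ = ∫ x, G ⟪w, x⟫ ∂ν := by rw [show ν.map ρ.toHomeomorph.toMeasurableEquiv = ν from hν ρ]

theorem integral_inner_pow_eq_norm_pow_mul (hν : ∀ ρ : F ≃ₗᵢ[ℝ] F, ν.map ρ = ν) (d : ℕ)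
    {e : F} (he : ‖e‖ = 1) (u : F) : ∫ x, ⟪u, x⟫ ^ d ∂ν = ‖u‖ ^ d * ∫ x, ⟪e, x⟫ ^ d ∂ν := by
  rcases eq_or_ne u 0 with rfl | hu
  · cases d <;> simp
  have hunit : ‖‖u‖⁻¹ • u‖ = ‖e‖ := by
    rw [norm_smul, norm_inv, norm_norm, inv_mul_cancel₀ (norm_ne_zero_iff.mpr hu), he]
  have hscale : ∀ x, ⟪u, x⟫ = ‖u‖ * ⟪‖u‖⁻¹ • u, x⟫ := fun x => by
    rw [real_inner_smul_left, mul_inv_cancel_left₀ (norm_ne_zero_iff.mpr hu)]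
  simp_rw [hscale, mul_pow]
  rw [integral_const_mul, integral_comp_inner_eq_of_norm_eq hν (· ^ d) hunit]

end RotationInvariance

namespace Heat

variable {n : ℕ}

theorem eval_zero_pdI (I : Fin n →₀ ℕ) (f : Poly n) :
    eval 0 (pdI n I f) = (I.prod fun _ k => k ! : ℕ) * f.coeff I := by
  rw [eval_zero, constantCoeff_eq, pdI, List.ofFn_eq_map,
    coeff_foldr_pderiv_iterate I _ (List.nodup_finRange n) 0 (fun _ _ => rfl), zero_add,
    ← List.ofFn_eq_map, ← List.ofFn_eq_map, List.sum_ofFn, List.prod_ofFn,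
    Finsupp.univ_sum_single, Finsupp.prod_fintype _ _ fun _ => Nat.factorial_zero]
  push_cast
  ring

theorem dPair_eq_fischer (g f : Poly n) : dPair n g f = fischer g f := by
  rw [dPair, map_sum, fischer]
  exact sum_congr rfl fun I _ => by rw [smul_eval, eval_zero_pdI]; ring

section Laplacian

theorem lap_apply (p : Poly n) : lap n p = -∑ i, pderiv i (pderiv i p) := by
  simp [lap]

theorem fischer_rsq_mul (q p : Poly n) : fischer (rsq n * q) p = -fischer q (lap n p) := by
  have hrsq : rsq n * q = ∑ i, X i * (X i * q) := by
    rw [rsq, sum_mul]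
    exact sum_congr rfl fun i _ => by ring
  rw [hrsq, fischer_sum_left, lap_apply, fischer_neg_right, neg_neg, fischer_sum_right]
  simp only [fischer_X_mul]

theorem lap_mul (f g : Poly n) :
    lap n (f * g) = lap n f * g + f * lap n g - 2 * ∑ i, pderiv i f * pderiv i g := by
  simp only [lap_apply, pderiv_mul, map_add, sum_add_distrib, ← sum_mul, ← mul_sum]
  ring

theorem lap_pderiv (i : Fin n) (f : Poly n) : lap n (pderiv i f) = pderiv i (lap n f) := by
  simp only [lap_apply, map_neg, map_sum, pderiv_comm i]

theorem pderiv_mem_harm {d : ℕ} {f : Poly n} (hf : f ∈ Harm n (d + 1)) (i : Fin n) :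
    pderiv i f ∈ Harm n d := by
  obtain ⟨hhom, hker⟩ := Submodule.mem_inf.mp hf
  rw [mem_homogeneousSubmodule] at hhom
  rw [LinearMap.mem_ker] at hker
  refine Submodule.mem_inf.mpr ⟨?_, ?_⟩
  · simpa using hhom.pderiv (i := i)
  · rw [LinearMap.mem_ker, lap_pderiv, hker, map_zero]

theorem fischer_rsq_pow_mul_of_mem_harm {d : ℕ} {f g : Poly n} (hf : f ∈ Harm n d)
    (hg : g ∈ Harm n d) : fischer (rsq n ^ d) (f * g) = 2 ^ d * d ! * fischer f g := by
  induction d generalizing f g with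
  | zero =>
    have hconst : ∀ p ∈ Harm n 0, p = C (p.coeff 0) := fun p hp =>
      totalDegree_eq_zero_iff_eq_C.mp
        ((totalDegree_zero_iff_isHomogeneous _).mpr (Submodule.mem_inf.mp hp).1)
    rw [hconst f hf, hconst g hg, pow_zero, ← C_1, ← C_mul, fischer_C_left, fischer_C_left]
    simp
  | succ d ih =>
    have hlap : lap n (f * g) = (-2 : ℝ) • ∑ i, pderiv i f * pderiv i g := by
      rw [lap_mul, LinearMap.mem_ker.mp (Submodule.mem_inf.mp hf).2,
        LinearMap.mem_ker.mp (Submodule.mem_inf.mp hg).2, smul_eq_C_mul, map_neg, map_ofNat]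
      ring
    rw [pow_succ', fischer_rsq_mul, hlap, fischer_smul_right, fischer_sum_right]
    simp_rw [ih (pderiv_mem_harm hf _) (pderiv_mem_harm hg _), ← mul_sum,
      sum_fischer_pderiv_pderiv (Submodule.mem_inf.mp hf).1, Nat.factorial_succ]
    push_cast
    ring

theorem rsq_isHomogeneous : (rsq n).IsHomogeneous 2 :=
  IsHomogeneous.sum _ _ 2 fun i _ => isHomogeneous_X_pow i 2

theorem pderiv_rsq (i : Fin n) : pderiv i (rsq n) = 2 * X i := by
  simp [rsq, pderiv_X, Pi.single_apply]

theorem lap_rsq_pow (d : ℕ) :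
    lap n (rsq n ^ (d + 1)) = -(2 * (d + 1) * (n + 2 * d) : ℝ) • rsq n ^ d := by
  have hpderiv : ∀ i, pderiv i (rsq n ^ (d + 1)) = (2 * (d + 1) : ℝ) • (X i * rsq n ^ d) := by
    intro i
    rw [pderiv_pow, pderiv_rsq, Nat.add_sub_cancel, smul_eq_C_mul]
    simp only [map_mul, map_ofNat, map_add, map_natCast, map_one]
    push_cast
    ring
  have hsecond : ∀ i, pderiv i (pderiv i (rsq n ^ (d + 1))) =
      (2 * (d + 1) : ℝ) • (rsq n ^ d + X i * pderiv i (rsq n ^ d)) := by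
    intro i
    rw [hpderiv, (pderiv i).map_smul, pderiv_mul, pderiv_X_self, one_mul]
  have heuler := (rsq_isHomogeneous (n := n)).pow d |>.sum_X_mul_pderiv
  rw [lap_apply, sum_congr rfl fun i _ => hsecond i, ← smul_sum, sum_add_distrib, heuler,
    sum_const, card_univ, Fintype.card_fin]
  module

theorem fischer_rsq_pow_self (d : ℕ) :
    fischer (rsq n ^ d) (rsq n ^ d) = 2 ^ d * d ! * ∏ k ∈ range d, ((n : ℝ) + 2 * k) := by
  induction d with
  | zero => simp [← C_1, fischer_C_left, -map_one]
  | succ d ih =>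
    nth_rewrite 1 [pow_succ']
    rw [fischer_rsq_mul, lap_rsq_pow, fischer_smul_right, ih, prod_range_succ, Nat.factorial_succ]
    push_cast
    ring

end Laplacian

section Moments

variable {μ : Measure (E n)}

def momentPoly (μ : Measure (E n)) (d : ℕ) : Poly n :=
  ∑ γ ∈ univ.finsuppAntidiag d,
    monomial γ ((∫ x, peval n (monomial γ 1) x ∂μ) / (γ.prod fun _ k => k ! : ℕ))

theorem momentPoly_isHomogeneous (μ : Measure (E n)) (d : ℕ) :
    (momentPoly μ d).IsHomogeneous d :=
  IsHomogeneous.sum _ _ _ fun γ hγ => isHomogeneous_monomial _ <| by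
    rw [Finsupp.degree_eq_sum]
    exact (mem_finsuppAntidiag.mp hγ).1

theorem integral_peval_eq_sum (hμ : ∀ p, Integrable (peval n p) μ) (p : Poly n) :
    ∫ x, peval n p x ∂μ = ∑ γ ∈ p.support, p.coeff γ * ∫ x, peval n (monomial γ 1) x ∂μ := by
  have hexpand : ∀ x, peval n p x = ∑ γ ∈ p.support, p.coeff γ * peval n (monomial γ 1) x := by
    intro x
    rw [peval, eval_eq]
    simp only [peval, eval_monomial, one_mul, Finsupp.prod]
  simp_rw [hexpand]
  rw [integral_finsetSum _ fun γ _ => (hμ _).const_mul _]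
  simp_rw [integral_const_mul]

theorem fischer_momentPoly (hμ : ∀ p, Integrable (peval n p) μ) {h : Poly n} {d : ℕ}
    (hh : h.IsHomogeneous d) : fischer (momentPoly μ d) h = ∫ x, peval n h x ∂μ :=
  calc fischer (momentPoly μ d) h
      = ∑ γ ∈ univ.finsuppAntidiag d, h.coeff γ * ∫ x, peval n (monomial γ 1) x ∂μ := by
        rw [momentPoly, fischer_sum_left]
        refine sum_congr rfl fun γ _ => ?_
        have hfac : ((γ.prod fun _ k => k ! : ℕ) : ℝ) ≠ 0 :=
          Nat.cast_ne_zero.mpr (prod_ne_zero_iff.mpr fun i _ => Nat.factorial_ne_zero _)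
        rw [fischer_monomial_left]
        field_simp
    _ = ∑ γ ∈ h.support, h.coeff γ * ∫ x, peval n (monomial γ 1) x ∂μ :=
        (sum_subset hh.support_subset_finsuppAntidiag fun γ _ hγ => by
          rw [notMem_support_iff.mp hγ, zero_mul]).symm
    _ = ∫ x, peval n h x ∂μ := (integral_peval_eq_sum hμ h).symm

theorem peval_sum_smul_X_pow (u : Fin n → ℝ) (d : ℕ) (x : E n) :
    peval n ((∑ i, u i • X i) ^ d) x = ⟪WithLp.toLp 2 u, x⟫ ^ d := by
  simp [peval, PiLp.inner_apply, mul_comm]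

theorem eval_momentPoly (hμ : ∀ p, Integrable (peval n p) μ) (u : Fin n → ℝ) (d : ℕ) :
    eval u (momentPoly μ d) = (d ! : ℝ)⁻¹ * ∫ x, ⟪WithLp.toLp 2 u, x⟫ ^ d ∂μ := by
  have hform : ((∑ i, u i • X i : Poly n) ^ d).IsHomogeneous d := by
    have hlin : (∑ i, u i • X i : Poly n).IsHomogeneous 1 :=
      IsHomogeneous.sum _ _ 1 fun i _ => by rw [smul_eq_C_mul]; exact isHomogeneous_C_mul_X _ i
    simpa using hlin.pow d
  have hkernel := fischer_sum_smul_X_pow u (momentPoly_isHomogeneous μ d)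
  rw [fischer_comm, fischer_momentPoly hμ hform] at hkernel
  simp_rw [peval_sum_smul_X_pow] at hkernel
  rw [hkernel]
  field_simp

theorem peval_rsq (x : E n) : peval n (rsq n) x = ‖x‖ ^ 2 := by
  simp [peval, rsq, EuclideanSpace.real_norm_sq_eq]

theorem momentPoly_eq_smul_rsq_pow (hn : 0 < n) (hμ : ∀ p, Integrable (peval n p) μ)
    (hinv : ∀ ρ : E n ≃ₗᵢ[ℝ] E n, μ.map ρ = μ) (s : ℕ) :
    ∃ c : ℝ, momentPoly μ (2 * s) = c • rsq n ^ s := by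
  set e : E n := EuclideanSpace.single ⟨0, hn⟩ 1
  have he : ‖e‖ = 1 := by simp [e]
  refine ⟨((2 * s)! : ℝ)⁻¹ * ∫ x, ⟪e, x⟫ ^ (2 * s) ∂μ, MvPolynomial.funext fun u => ?_⟩
  have hrsq : eval u (rsq n) = ‖(WithLp.toLp 2 u : E n)‖ ^ 2 := peval_rsq _
  rw [eval_momentPoly hμ, integral_inner_pow_eq_norm_pow_mul hinv _ he, smul_eval, map_pow, hrsq,
    pow_mul]
  ring

end Moments

section SphereMeasure

variable {μ : Measure (E n)}

theorem IsSphereMeasure.ae_mem_sphere (hμ : IsSphereMeasure n μ) :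
    ∀ᵐ x ∂μ, x ∈ Metric.sphere (0 : E n) 1 :=
  measure_eq_zero_iff_ae_notMem.mp hμ.supp |>.mono fun _ h => not_not.mp h

theorem IsSphereMeasure.integrable_peval (hμ : IsSphereMeasure n μ) (p : Poly n) :
    Integrable (peval n p) μ := by
  have := hμ.prob
  have hcont : Continuous (peval n p) := (continuous_eval p).comp (PiLp.continuous_ofLp 2 _)
  rw [← Measure.restrict_eq_self_of_ae_mem hμ.ae_mem_sphere]
  exact hcont.continuousOn.integrableOn_compact (isCompact_sphere 0 1)

theorem IsSphereMeasure.integral_peval_rsq_pow (hμ : IsSphereMeasure n μ) (k : ℕ) :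
    ∫ x, peval n (rsq n ^ k) x ∂μ = 1 := by
  have := hμ.prob
  rw [integral_congr_ae (g := fun _ => 1), integral_const, probReal_univ, smul_eq_mul, mul_one]
  filter_upwards [hμ.ae_mem_sphere] with x hx
  rw [peval, map_pow, ← peval, peval_rsq, mem_sphere_zero_iff_norm.mp hx, one_pow, one_pow]

theorem IsSphereMeasure.exists_integral_peval_eq_mul_fischer (hn : 0 < n)
    (hμ : IsSphereMeasure n μ) (s : ℕ) :
    ∃ c : ℝ, ∀ h : Poly n, h.IsHomogeneous (2 * s) →
      ∫ x, peval n h x ∂μ = c * fischer (rsq n ^ s) h := by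
  obtain ⟨c, hc⟩ := momentPoly_eq_smul_rsq_pow hn hμ.integrable_peval hμ.inv s
  exact ⟨c, fun h hh => by rw [← fischer_momentPoly hμ.integrable_peval hh, hc, fischer_smul_left]⟩

end SphereMeasure

/-- for harmonic homogeneous polynomials `f, g` of degree `2m`, the
spherical integral of `f·g` equals `(∏_{k=0}^{2m-1}(n+2k))⁻¹ ⟨f,g⟩`. -/
theorem statement4 (n m : ℕ) (hn : 0 < n)
    (μ : Measure (E n)) (hμ : IsSphereMeasure n μ)
    (f g : Poly n) (hf : f ∈ Harm n (2 * m)) (hg : g ∈ Harm n (2 * m)) :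
    ∫ x, peval n f x * peval n g x ∂μ =
      (∏ k ∈ Finset.range (2 * m), ((n : ℝ) + 2 * (k : ℝ)))⁻¹ * dPair n f g := by
  obtain ⟨c, hc⟩ := hμ.exists_integral_peval_eq_mul_fischer hn (2 * m)
  have hnorm := hc _ (rsq_isHomogeneous.pow (2 * m))
  rw [hμ.integral_peval_rsq_pow, fischer_rsq_pow_self, ← mul_assoc, eq_comm] at hnorm
  have hfg : (f * g).IsHomogeneous (2 * (2 * m)) := by
    simpa only [two_mul] using (Submodule.mem_inf.mp hf).1.mul (Submodule.mem_inf.mp hg).1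
  calc ∫ x, peval n f x * peval n g x ∂μ = ∫ x, peval n (f * g) x ∂μ := by simp [peval]
    _ = c * (2 ^ (2 * m) * (2 * m)! * fischer f g) := by
      rw [hc _ hfg, fischer_rsq_pow_mul_of_mem_harm hf hg]
    _ = _ := by rw [dPair_eq_fischer, ← eq_inv_of_mul_eq_one_left hnorm]; ring

end Heat
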